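/- arXiv:math/0411312 — 4 statements merged into one kernel-verified Lean document; each statement's English description precedes it below -/
import Mathlib

section
/- For three unit vectors T₁, T₂, T₃ in ℝⁿ, define tc := sup over unit vectors e of Σℓ (π/2 − βℓ(e)), where βℓ(e) = arccos⟨Tℓ, e⟩. Then tc ≥ π/6. -/
open Real RealInnerProductSpace

/-- arccos is antitone. -/
lemma arccos_le_arccos' {x y : ℝ} (h : x ≤ y) : Real.arccos y ≤ Real.arccos x := by
  rw [Real.arccos_eq_pi_div_two_sub_arcsin, Real.arccos_eq_pi_div_two_sub_arcsin]
  have := Real.monotone_arcsin h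
  linarith

/-- Triangle inequality for angles between unit vectors. -/
lemma arccos_inner_triangle {E : Type*} [NormedAddCommGroup E] [InnerProductSpace ℝ E]
    (x y z : E) (hx : ‖x‖ = 1) (hy : ‖y‖ = 1) (hz : ‖z‖ = 1) :
    Real.arccos ⟪x, z⟫ ≤ Real.arccos ⟪x, y⟫ + Real.arccos ⟪y, z⟫ := by
  set a : ℝ := ⟪x, y⟫ with ha
  set b : ℝ := ⟪y, z⟫ with hb
  set c : ℝ := ⟪x, z⟫ with hc
  have hax : |a| ≤ 1 := by
    have := abs_real_inner_le_norm x y; rwa [hx, hy, one_mul] at this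
  have hbx : |b| ≤ 1 := by
    have := abs_real_inner_le_norm y z; rwa [hy, hz, one_mul] at this
  have ha1 : -1 ≤ a := neg_le_of_abs_le hax
  have ha2 : a ≤ 1 := le_of_abs_le hax
  have hb1 : -1 ≤ b := neg_le_of_abs_le hbx
  have hb2 : b ≤ 1 := le_of_abs_le hbx
  by_cases hcase : π ≤ Real.arccos a + Real.arccos b
  · exact le_trans (Real.arccos_le_pi c) hcase
  push_neg at hcase
  have key : Real.cos (Real.arccos a + Real.arccos b) ≤ c := by
    rw [Real.cos_add, Real.cos_arccos ha1 ha2, Real.cos_arccos hb1 hb2,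
      Real.sin_arccos, Real.sin_arccos]
    -- reduce to inner product inequality
    set u : E := x - a • y with hu
    set w : E := z - b • y with hw
    have hyy : ⟪y, y⟫ = (1 : ℝ) := by
      rw [real_inner_self_eq_norm_sq, hy]; norm_num
    have hyx : ⟪y, x⟫ = a := by rw [real_inner_comm]
    have hzy : ⟪z, y⟫ = b := by rw [real_inner_comm]
    have huw : ⟪u, w⟫ = c - a * b := by
      simp only [hu, hw, inner_sub_left, inner_sub_right, real_inner_smul_left,
        real_inner_smul_right, hyy, hyx, hzy]
      ring
    have hun : ‖u‖ = Real.sqrt (1 - a ^ 2) := by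
      have : ‖u‖ ^ 2 = 1 - a ^ 2 := by
        rw [← real_inner_self_eq_norm_sq]
        simp only [hu, inner_sub_left, inner_sub_right, real_inner_smul_left,
          real_inner_smul_right, hyy, hyx]
        have hxx : ⟪x, x⟫ = (1 : ℝ) := by
          rw [real_inner_self_eq_norm_sq, hx]; norm_num
        rw [hxx]; ring
      rw [← this, Real.sqrt_sq (norm_nonneg u)]
    have hwn : ‖w‖ = Real.sqrt (1 - b ^ 2) := by
      have : ‖w‖ ^ 2 = 1 - b ^ 2 := by
        rw [← real_inner_self_eq_norm_sq]
        simp only [hw, inner_sub_left, inner_sub_right, real_inner_smul_left,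
          real_inner_smul_right, hyy, hzy]
        have hzz : ⟪z, z⟫ = (1 : ℝ) := by
          rw [real_inner_self_eq_norm_sq, hz]; norm_num
        rw [hzz, ← hb]; ring
      rw [← this, Real.sqrt_sq (norm_nonneg w)]
    have hbound : -(‖u‖ * ‖w‖) ≤ ⟪u, w⟫ := by
      have h1 := abs_real_inner_le_norm u w
      have := neg_abs_le (⟪u, w⟫ : ℝ)
      linarith
    rw [hun, hwn, huw] at hbound
    linarith
  have h0 : 0 ≤ Real.arccos a + Real.arccos b :=
    add_nonneg (Real.arccos_nonneg a) (Real.arccos_nonneg b)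
  calc Real.arccos c ≤ Real.arccos (Real.cos (Real.arccos a + Real.arccos b)) :=
        arccos_le_arccos' key
    _ = Real.arccos a + Real.arccos b := Real.arccos_cos h0 hcase.le

/-- The contribution to total curvature at a trivalent vertex with unit tangent
directions `T₁, T₂, T₃` in `ℝⁿ`:  `tc = sup over unit vectors e of Σℓ (π/2 − βℓ(e))`,
where `βℓ(e) = arccos ⟨Tℓ, e⟩`. -/
noncomputable def tcVertex3 (n : ℕ) (T₁ T₂ T₃ : EuclideanSpace ℝ (Fin n)) : ℝ :=
  sSup {s : ℝ | ∃ e : EuclideanSpace ℝ (Fin n), ‖e‖ = 1 ∧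
    s = (π / 2 - Real.arccos ⟪T₁, e⟫) + (π / 2 - Real.arccos ⟪T₂, e⟫)
      + (π / 2 - Real.arccos ⟪T₃, e⟫)}

/-- For three unit vectors in `ℝⁿ` (`n ≥ 2`), the vertex total-curvature
contribution is at least `π/6`. -/
theorem tcVertex3_ge_pi_div_six (n : ℕ) (hn : 2 ≤ n)
    (T₁ T₂ T₃ : EuclideanSpace ℝ (Fin n))
    (h₁ : ‖T₁‖ = 1) (h₂ : ‖T₂‖ = 1) (h₃ : ‖T₃‖ = 1) :
    π / 6 ≤ tcVertex3 n T₁ T₂ T₃ := by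
  set S := {s : ℝ | ∃ e : EuclideanSpace ℝ (Fin n), ‖e‖ = 1 ∧
    s = (π / 2 - Real.arccos ⟪T₁, e⟫) + (π / 2 - Real.arccos ⟪T₂, e⟫)
      + (π / 2 - Real.arccos ⟪T₃, e⟫)} with hS
  have hBdd : BddAbove S := by
    refine ⟨3 * (π / 2), ?_⟩
    rintro s ⟨e, he, rfl⟩
    have g1 := Real.arccos_nonneg (⟪T₁, e⟫ : ℝ)
    have g2 := Real.arccos_nonneg (⟪T₂, e⟫ : ℝ)
    have g3 := Real.arccos_nonneg (⟪T₃, e⟫ : ℝ)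
    linarith
  -- self-inner products
  have self1 : Real.arccos ⟪T₁, T₁⟫ = 0 := by
    rw [real_inner_self_eq_norm_sq, h₁]; norm_num
  have self2 : Real.arccos ⟪T₂, T₂⟫ = 0 := by
    rw [real_inner_self_eq_norm_sq, h₂]; norm_num
  have self3 : Real.arccos ⟪T₃, T₃⟫ = 0 := by
    rw [real_inner_self_eq_norm_sq, h₃]; norm_num
  -- pairwise angles
  set θ₁₂ := Real.arccos ⟪T₁, T₂⟫ with hθ12
  set θ₁₃ := Real.arccos ⟪T₁, T₃⟫ with hθ13
  set θ₂₃ := Real.arccos ⟪T₂, T₃⟫ with hθ23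
  -- perimeter bound via triangle inequality through -T₁
  have hperim : θ₁₂ + θ₁₃ + θ₂₃ ≤ 2 * π := by
    have hneg : ‖(-T₁ : EuclideanSpace ℝ (Fin n))‖ = 1 := by rw [norm_neg, h₁]
    have htri := arccos_inner_triangle T₂ (-T₁) T₃ h₂ hneg h₃
    have e1 : (⟪T₂, -T₁⟫ : ℝ) = -⟪T₁, T₂⟫ := by
      rw [inner_neg_right, real_inner_comm]
    have e2 : (⟪-T₁, T₃⟫ : ℝ) = -⟪T₁, T₃⟫ := by rw [inner_neg_left]
    rw [e1, e2, Real.arccos_neg, Real.arccos_neg] at htri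
    linarith
  -- membership of the three candidate values
  have mem1 : (π / 2 - Real.arccos ⟪T₁, T₁⟫) + (π / 2 - Real.arccos ⟪T₂, T₁⟫)
      + (π / 2 - Real.arccos ⟪T₃, T₁⟫) ∈ S := ⟨T₁, h₁, rfl⟩
  have mem2 : (π / 2 - Real.arccos ⟪T₁, T₂⟫) + (π / 2 - Real.arccos ⟪T₂, T₂⟫)
      + (π / 2 - Real.arccos ⟪T₃, T₂⟫) ∈ S := ⟨T₂, h₂, rfl⟩
  have mem3 : (π / 2 - Real.arccos ⟪T₁, T₃⟫) + (π / 2 - Real.arccos ⟪T₂, T₃⟫)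
      + (π / 2 - Real.arccos ⟪T₃, T₃⟫) ∈ S := ⟨T₃, h₃, rfl⟩
  have c21 : Real.arccos ⟪T₂, T₁⟫ = θ₁₂ := by rw [hθ12, real_inner_comm]
  have c31 : Real.arccos ⟪T₃, T₁⟫ = θ₁₃ := by rw [hθ13, real_inner_comm]
  have c32 : Real.arccos ⟪T₃, T₂⟫ = θ₂₃ := by rw [hθ23, real_inner_comm]
  rw [self1, c21, c31] at mem1
  rw [c32, self2] at mem2
  rw [self3] at mem3
  set s₁ := (π / 2 - 0) + (π / 2 - θ₁₂) + (π / 2 - θ₁₃) with hs₁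
  set s₂ := (π / 2 - θ₁₂) + (π / 2 - 0) + (π / 2 - θ₂₃) with hs₂
  set s₃ := (π / 2 - θ₁₃) + (π / 2 - θ₂₃) + (π / 2 - 0) with hs₃
  have hsum : π / 2 ≤ s₁ + s₂ + s₃ := by
    rw [hs₁, hs₂, hs₃]; linarith
  -- one of the three is at least π/6
  have hmax : π / 6 ≤ s₁ ∨ π / 6 ≤ s₂ ∨ π / 6 ≤ s₃ := by
    by_contra h
    push_neg at h
    obtain ⟨q1, q2, q3⟩ := h
    linarith
  rcases hmax with h | h | h
  · exact le_trans h (le_csSup hBdd mem1)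
  · exact le_trans h (le_csSup hBdd mem2)
  · exact le_trans h (le_csSup hBdd mem3)
end

section
/- Let ξ₁, ξ₂, ξ₃, ξ₄ be unit vectors in ℝ² with ξ₁+ξ₂+ξ₃+ξ₄ = 0, indexed in circular (angular) order around the unit circle. Then ξ₁ = −ξ₃ and ξ₂ = −ξ₄. -/
open Real

lemma cos_eq_resolve {x y : ℝ} (hx0 : 0 ≤ x) (hx : x < 2 * π) (hy0 : 0 ≤ y)
    (hy : y ≤ 2 * π) (h : Real.cos x = Real.cos y) : y = x ∨ y = 2 * π - x := by
  have hπ := Real.pi_pos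
  obtain ⟨k, hk | hk⟩ := Real.cos_eq_cos_iff.1 h
  · have h1' : k ≤ 1 := by
      by_contra hcon; push_neg at hcon
      have : (2:ℝ) ≤ k := by exact_mod_cast hcon
      nlinarith
    have h2' : 0 ≤ k := by
      by_contra hcon; push_neg at hcon
      have : (k:ℝ) ≤ -1 := by exact_mod_cast (by omega : k ≤ -1)
      nlinarith
    interval_cases k
    · left; simpa using hk
    · right
      have hx0' : x = 0 := by push_cast at hk; nlinarith
      rw [hx0', hk, hx0']; push_cast; ring
  · have h1' : k ≤ 1 := by
      by_contra hcon; push_neg at hcon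
      have : (2:ℝ) ≤ k := by exact_mod_cast hcon
      nlinarith
    have h2' : 0 ≤ k := by
      by_contra hcon; push_neg at hcon
      have : (k:ℝ) ≤ -1 := by exact_mod_cast (by omega : k ≤ -1)
      nlinarith
    interval_cases k
    · left; push_cast at hk; nlinarith
    · right; push_cast at hk; linarith

/-- Four unit vectors in the plane, indexed in circular (angular) order, which
sum to zero, form two antipodal pairs of opposite indices: `ξ₁ = −ξ₃` and
`ξ₂ = −ξ₄`. -/
theorem circular_order_sum_zero_antipodal (θ : Fin 4 → ℝ) (ξ : Fin 4 → ℝ × ℝ)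
    (hξ : ∀ i, ξ i = (Real.cos (θ i), Real.sin (θ i)))
    (hord : θ 0 ≤ θ 1 ∧ θ 1 ≤ θ 2 ∧ θ 2 ≤ θ 3 ∧ θ 3 < θ 0 + 2 * π)
    (hsum : ξ 0 + ξ 1 + ξ 2 + ξ 3 = 0) :
    ξ 0 = -ξ 2 ∧ ξ 1 = -ξ 3 := by
  obtain ⟨h01, h12, h23, h30⟩ := hord
  have hπ := Real.pi_pos
  have e0 := hξ 0
  have e1 := hξ 1
  have e2 := hξ 2
  have e3 := hξ 3
  rw [e0, e1, e2, e3] at hsum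
  rw [Prod.ext_iff] at hsum
  simp only [Prod.fst_add, Prod.snd_add, Prod.fst_zero, Prod.snd_zero] at hsum
  obtain ⟨hc, hs⟩ := hsum
  have p0 := Real.sin_sq_add_cos_sq (θ 0)
  have p1 := Real.sin_sq_add_cos_sq (θ 1)
  have p2 := Real.sin_sq_add_cos_sq (θ 2)
  have p3 := Real.sin_sq_add_cos_sq (θ 3)
  have q1 : Real.cos (θ 1 - θ 0) = Real.cos (θ 3 - θ 2) := by
    rw [Real.cos_sub, Real.cos_sub]
    linear_combination ((Real.cos (θ 0) + Real.cos (θ 1) - Real.cos (θ 2) - Real.cos (θ 3))/2) * hc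
      + ((Real.sin (θ 0) + Real.sin (θ 1) - Real.sin (θ 2) - Real.sin (θ 3))/2) * hs
      - (1/2) * p0 - (1/2) * p1 + (1/2) * p2 + (1/2) * p3
  have q2 : Real.cos (θ 2 - θ 1) = Real.cos (θ 0 + 2 * π - θ 3) := by
    have h2pi : Real.cos (θ 0 + 2 * π - θ 3) = Real.cos (θ 3 - θ 0) := by
      rw [show θ 0 + 2 * π - θ 3 = -(θ 3 - θ 0) + 2 * π by ring, Real.cos_add_two_pi,
        Real.cos_neg]
    rw [h2pi, Real.cos_sub, Real.cos_sub]
    linear_combination ((Real.cos (θ 1) + Real.cos (θ 2) - Real.cos (θ 0) - Real.cos (θ 3))/2) * hc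
      + ((Real.sin (θ 1) + Real.sin (θ 2) - Real.sin (θ 0) - Real.sin (θ 3))/2) * hs
      + (1/2) * p0 - (1/2) * p1 - (1/2) * p2 + (1/2) * p3
  have r1 := cos_eq_resolve (x := θ 1 - θ 0) (y := θ 3 - θ 2)
    (by linarith) (by linarith) (by linarith) (by linarith) q1
  have r2 := cos_eq_resolve (x := θ 2 - θ 1) (y := θ 0 + 2 * π - θ 3)
    (by linarith) (by linarith) (by linarith) (by linarith) q2
  rcases r1 with r1 | r1
  · rcases r2 with r2 | r2
    · -- main case: θ2 = θ0 + π, θ3 = θ1 + π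
      have hθ2 : θ 2 = θ 0 + π := by linarith
      have hθ3 : θ 3 = θ 1 + π := by linarith
      constructor
      · rw [e0, e2, hθ2, Real.cos_add_pi, Real.sin_add_pi, Prod.neg_mk, neg_neg, neg_neg]
      · rw [e1, e3, hθ3, Real.cos_add_pi, Real.sin_add_pi, Prod.neg_mk, neg_neg, neg_neg]
    · -- degenerate: θ1 = θ0 and θ3 = θ2
      have hα : θ 1 = θ 0 := by linarith
      have hγ : θ 3 = θ 2 := by linarith
      rw [hα, hγ] at hc hs
      have hcc : Real.cos (θ 0) = -Real.cos (θ 2) := by linarith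
      have hss : Real.sin (θ 0) = -Real.sin (θ 2) := by linarith
      constructor
      · rw [e0, e2, hcc, hss, Prod.neg_mk]
      · rw [e1, e3, hα, hγ, hcc, hss, Prod.neg_mk]
  · rcases r2 with r2 | r2
    · exfalso; linarith
    · exfalso; linarith
end

section
/- Let T₁,...,T_d be unit vectors in ℝ³ all lying in a plane through the origin and making equal consecutive angles 2π/d, and let N be a unit vector orthogonal to that plane. Then N minimizes e ↦ Σℓ d_{S²}(e, Tℓ) if and only if d is even. In particular, for odd d = 2k+1, Σℓ d_{S²}(T₁, Tℓ) = (1+2+⋯+k)·4π/(2k+1) < (2k+1)π/2 = Σℓ d_{S²}(N, Tℓ). -/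
open Real RealInnerProductSpace

lemma sum_range_cast_real (n : ℕ) : ∑ i ∈ Finset.range n, (i : ℝ) = n * (n - 1) / 2 := by
  induction n with
  | zero => simp
  | succ n ih => rw [Finset.sum_range_succ, ih]; push_cast; ring

lemma sum_range_rev_cast (k : ℕ) : ∑ i ∈ Finset.range k, ((k : ℝ) - i) = k * (k + 1) / 2 := by
  induction k with
  | zero => simp
  | succ k ih =>
    rw [Finset.sum_range_succ]
    have h : ∀ i ∈ Finset.range k, (((k : ℕ) + 1 : ℕ) : ℝ) - (i : ℝ) = ((k : ℝ) - i) + 1 := by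
      intro i _; push_cast; ring
    rw [Finset.sum_congr rfl h, Finset.sum_add_distrib, ih, Finset.sum_const,
      Finset.card_range]
    push_cast; ring

lemma sum_arccos_cos_odd (k : ℕ) :
    ∑ ℓ ∈ Finset.range (2 * k + 1), Real.arccos (Real.cos (2 * π * ℓ / (2 * (k : ℝ) + 1))) =
      (k : ℝ) * (k + 1) * (2 * π) / (2 * (k : ℝ) + 1) := by
  have hπ := Real.pi_pos
  have hd : (0 : ℝ) < 2 * (k : ℝ) + 1 := by positivity
  have hsplit : 2 * k + 1 = (k + 1) + k := by ring
  rw [hsplit, Finset.sum_range_add]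
  have h1 : ∑ ℓ ∈ Finset.range (k + 1),
      Real.arccos (Real.cos (2 * π * ℓ / (2 * (k : ℝ) + 1)))
      = ∑ ℓ ∈ Finset.range (k + 1), 2 * π * ℓ / (2 * (k : ℝ) + 1) := by
    refine Finset.sum_congr rfl fun ℓ hℓ => ?_
    have hℓ' : (ℓ : ℝ) ≤ k := by
      exact_mod_cast Nat.lt_succ_iff.mp (Finset.mem_range.mp hℓ)
    have h0 : (0:ℝ) ≤ (ℓ : ℝ) := Nat.cast_nonneg ℓ
    apply Real.arccos_cos
    · positivity
    · rw [div_le_iff₀ hd]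
      nlinarith
  have h2 : ∑ i ∈ Finset.range k,
      Real.arccos (Real.cos (2 * π * ((k + 1) + i : ℕ) / (2 * (k : ℝ) + 1)))
      = ∑ i ∈ Finset.range k, 2 * π * ((k : ℝ) - i) / (2 * (k : ℝ) + 1) := by
    refine Finset.sum_congr rfl fun i hi => ?_
    have hi' : (i : ℝ) ≤ (k : ℝ) - 1 := by
      have := Finset.mem_range.mp hi
      have : (i : ℝ) + 1 ≤ k := by exact_mod_cast this
      linarith
    have h0 : (0:ℝ) ≤ (i : ℝ) := Nat.cast_nonneg i
    have key : 2 * π * (((k + 1) + i : ℕ) : ℝ) / (2 * (k : ℝ) + 1)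
        = 2 * π - 2 * π * ((k : ℝ) - i) / (2 * (k : ℝ) + 1) := by
      push_cast; field_simp; ring
    rw [key, Real.cos_two_pi_sub, Real.arccos_cos]
    · exact div_nonneg (by nlinarith) hd.le
    · rw [div_le_iff₀ hd]
      nlinarith
  rw [h1, h2]
  have e1 : ∑ ℓ ∈ Finset.range (k + 1), 2 * π * ℓ / (2 * (k : ℝ) + 1)
      = 2 * π * ((k : ℝ) * (k + 1) / 2) / (2 * (k : ℝ) + 1) := by
    rw [← Finset.sum_div, ← Finset.mul_sum, sum_range_cast_real]
    push_cast; ring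
  have e2 : ∑ i ∈ Finset.range k, 2 * π * ((k : ℝ) - i) / (2 * (k : ℝ) + 1)
      = 2 * π * ((k : ℝ) * (k + 1) / 2) / (2 * (k : ℝ) + 1) := by
    rw [← Finset.sum_div, ← Finset.mul_sum, sum_range_rev_cast]
  rw [e1, e2]; ring

/-- Let `T₁,…,T_d` be unit vectors lying in a plane through the origin of `ℝ³`,
equally spaced at consecutive angles `2π/d`, and let `N` be a unit vector
orthogonal to that plane.  Then `N` minimizes `e ↦ Σℓ d_{S²}(e, Tℓ)` if and only
if `d` is even; and when `d = 2k+1` is odd,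
`Σℓ d_{S²}(T₁, Tℓ) = (1+⋯+k)·4π/(2k+1) < (2k+1)·π/2 = Σℓ d_{S²}(N, Tℓ)`. -/
theorem coplanar_equal_angles_steiner_iff_even (d : ℕ) (hd : 0 < d)
    (N u v : EuclideanSpace ℝ (Fin 3))
    (hN : ‖N‖ = 1) (hu : ‖u‖ = 1) (hv : ‖v‖ = 1)
    (hNu : ⟪N, u⟫ = 0) (hNv : ⟪N, v⟫ = 0) (huv : ⟪u, v⟫ = 0)
    (T : Fin d → EuclideanSpace ℝ (Fin 3))
    (hT : ∀ ℓ : Fin d, T ℓ = Real.cos (2 * π * ℓ / d) • u +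
      Real.sin (2 * π * ℓ / d) • v) :
    ((∀ e : EuclideanSpace ℝ (Fin 3), ‖e‖ = 1 →
        (∑ ℓ, Real.arccos ⟪N, T ℓ⟫) ≤ ∑ ℓ, Real.arccos ⟪e, T ℓ⟫) ↔ Even d) ∧
    (∀ k : ℕ, d = 2 * k + 1 →
      (∑ ℓ, Real.arccos ⟪T ⟨0, hd⟩, T ℓ⟫) =
          (k * (k + 1) / 2 : ℝ) * (4 * π / (2 * k + 1)) ∧
      (∑ ℓ, Real.arccos ⟪T ⟨0, hd⟩, T ℓ⟫) < ∑ ℓ, Real.arccos ⟪N, T ℓ⟫ ∧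
      (∑ ℓ, Real.arccos ⟪N, T ℓ⟫) = (2 * k + 1) * (π / 2)) := by
  have hπ := Real.pi_pos
  have hdR : (0 : ℝ) < d := by exact_mod_cast hd
  have hNT : ∀ ℓ : Fin d, ⟪N, T ℓ⟫ = 0 := by
    intro ℓ
    rw [hT ℓ, inner_add_right, real_inner_smul_right, real_inner_smul_right, hNu, hNv]
    ring
  have hsumN : (∑ ℓ, Real.arccos ⟪N, T ℓ⟫) = d * (π / 2) := by
    simp only [hNT, Real.arccos_zero, Finset.sum_const, Finset.card_univ, Fintype.card_fin,
      nsmul_eq_mul]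
  have huu : ⟪u, u⟫ = (1 : ℝ) := by
    rw [real_inner_self_eq_norm_sq, hu]; norm_num
  have hT0 : T ⟨0, hd⟩ = u := by
    rw [hT ⟨0, hd⟩]
    norm_num
  have hT0T : ∀ ℓ : Fin d, ⟪T ⟨0, hd⟩, T ℓ⟫ = Real.cos (2 * π * ℓ / d) := by
    intro ℓ
    rw [hT0, hT ℓ, inner_add_right, real_inner_smul_right, real_inner_smul_right, huv, huu]
    ring
  -- even case: the sum is constant
  have heven : ∀ m : ℕ, d = m + m → ∀ e : EuclideanSpace ℝ (Fin 3),
      (∑ ℓ, Real.arccos ⟪e, T ℓ⟫) = d * (π / 2) := by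
    intro m hm e
    have hconv : (∑ ℓ, Real.arccos ⟪e, T ℓ⟫)
        = ∑ ℓ ∈ Finset.range d, Real.arccos
            (Real.cos (2 * π * ℓ / d) * ⟪e, u⟫ + Real.sin (2 * π * ℓ / d) * ⟪e, v⟫) := by
      rw [← Fin.sum_univ_eq_sum_range]
      refine Finset.sum_congr rfl fun ℓ _ => ?_
      rw [hT ℓ, inner_add_right, real_inner_smul_right, real_inner_smul_right]
    rw [hconv]
    have hrw : Finset.range d = Finset.range (m + m) := by rw [hm]
    rw [hrw, Finset.sum_range_add, ← Finset.sum_add_distrib]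
    have hpair : ∀ ℓ ∈ Finset.range m,
        (Real.arccos (Real.cos (2 * π * ℓ / d) * ⟪e, u⟫ + Real.sin (2 * π * ℓ / d) * ⟪e, v⟫)
        + Real.arccos (Real.cos (2 * π * ((m + ℓ : ℕ) : ℝ) / d) * ⟪e, u⟫
            + Real.sin (2 * π * ((m + ℓ : ℕ) : ℝ) / d) * ⟪e, v⟫)) = π := by
      intro ℓ _
      have hθ : 2 * π * ((m + ℓ : ℕ) : ℝ) / d = 2 * π * ℓ / d + π := by
        have hmd : (d : ℝ) = 2 * m := by rw [hm]; push_cast; ring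
        rw [hmd]
        have hm0 : (0:ℝ) < (m : ℝ) := by
          have : 0 < m := by omega
          exact_mod_cast this
        push_cast
        field_simp
        ring
      rw [hθ, Real.cos_add_pi, Real.sin_add_pi]
      have : -Real.cos (2 * π * ℓ / d) * ⟪e, u⟫ + -Real.sin (2 * π * ℓ / d) * ⟪e, v⟫
          = -(Real.cos (2 * π * ℓ / d) * ⟪e, u⟫ + Real.sin (2 * π * ℓ / d) * ⟪e, v⟫) := by ring
      rw [this, Real.arccos_neg]
      ring
    rw [Finset.sum_congr rfl hpair, Finset.sum_const, Finset.card_range, nsmul_eq_mul]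
    have : (d : ℝ) = 2 * m := by rw [hm]; push_cast; ring
    rw [this]; ring
  -- odd case computations
  have part2 : ∀ k : ℕ, d = 2 * k + 1 →
      (∑ ℓ, Real.arccos ⟪T ⟨0, hd⟩, T ℓ⟫) =
          (k * (k + 1) / 2 : ℝ) * (4 * π / (2 * k + 1)) ∧
      (∑ ℓ, Real.arccos ⟪T ⟨0, hd⟩, T ℓ⟫) < ∑ ℓ, Real.arccos ⟪N, T ℓ⟫ ∧
      (∑ ℓ, Real.arccos ⟪N, T ℓ⟫) = (2 * k + 1) * (π / 2) := by
    intro k hk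
    have hsum0 : (∑ ℓ, Real.arccos ⟪T ⟨0, hd⟩, T ℓ⟫)
        = (k : ℝ) * (k + 1) * (2 * π) / (2 * (k : ℝ) + 1) := by
      have hc : (∑ ℓ, Real.arccos ⟪T ⟨0, hd⟩, T ℓ⟫)
          = ∑ ℓ ∈ Finset.range d, Real.arccos (Real.cos (2 * π * ℓ / d)) := by
        rw [← Fin.sum_univ_eq_sum_range]
        exact Finset.sum_congr rfl fun ℓ _ => by rw [hT0T]
      have hdcast : (d : ℝ) = 2 * (k : ℝ) + 1 := by rw [hk]; push_cast; ring
      rw [hc, hdcast, show Finset.range d = Finset.range (2 * k + 1) from by rw [hk]]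
      exact sum_arccos_cos_odd k
    have hk2 : (0:ℝ) < 2 * (k : ℝ) + 1 := by positivity
    refine ⟨?_, ?_, ?_⟩
    · rw [hsum0]; ring
    · rw [hsum0, hsumN, show (d : ℝ) = 2 * (k : ℝ) + 1 from by rw [hk]; push_cast; ring]
      rw [div_lt_iff₀ hk2]
      nlinarith
    · rw [hsumN, show (d : ℝ) = 2 * (k : ℝ) + 1 from by rw [hk]; push_cast; ring]
  refine ⟨⟨?_, ?_⟩, part2⟩
  · intro hmin
    by_contra hodd
    obtain ⟨k, hk⟩ := Nat.not_even_iff_odd.mp hodd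
    obtain ⟨h1, h2, h3⟩ := part2 k hk
    have hTnorm : ‖T ⟨0, hd⟩‖ = 1 := by rw [hT0]; exact hu
    have := hmin (T ⟨0, hd⟩) hTnorm
    linarith
  · rintro ⟨m, hm⟩ e he
    rw [hsumN, heven m hm e]
end

section
/- Let Γ₀ be a smooth closed curve in ℝⁿ lying outside the closed unit ball centered at p, and let Π_p(x) = p + (x−p)/|x−p| be radial projection onto the unit sphere around p. Then the length of Π_p(Γ₀) equals −∫_{Γ₀} k⃗ · ν_C ds, where k⃗ is the curvature vector of Γ₀ in ℝⁿ and ν_C(q) is the unit vector normal to Γ₀ at q, lying in the plane spanned by the tangent vector at q and q−p, and pointing away from p. -/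
/-!
Put `c = γ - p` and let `v = c - ⟪γ', c⟫ γ'` be the component of `c` orthogonal to the tangent.
The conormal of the cone is `ν = v / ‖v‖`, and the radial projection `c / ‖c‖` has speed
`‖v‖ / ‖c‖²`. The angle `φ = arcsin (⟪γ', c⟫ / ‖c‖)` between the ruling `c` and the conormal `ν` is
measured in the flat cone, so it changes at the polar-angle rate plus the geodesic curvature:
`φ' = ‖v‖ / ‖c‖² + ⟪γ'', ν⟫`. As `φ` is `L`-periodic, `∫₀ᴸ φ' = 0`.
-/

open Real RealInnerProductSpace intervalIntegral

variable {E : Type*} [NormedAddCommGroup E] [InnerProductSpace ℝ E]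

theorem norm_sub_inner_smul_sq {u : E} (hu : ‖u‖ = 1) (w : E) :
    ‖w - ⟪u, w⟫ • u‖ ^ 2 = ‖w‖ ^ 2 - ⟪u, w⟫ ^ 2 := by
  rw [@norm_sub_sq_real, norm_smul, real_inner_smul_right, hu, Real.norm_eq_abs, mul_one,
    sq_abs, real_inner_comm u w]
  ring

theorem eq_inv_norm_smul_of_mem_span_pair {u w ν : E} (hu : ‖u‖ = 1) (hν : ‖ν‖ = 1)
    (hνu : ⟪ν, u⟫ = 0) (hspan : ν ∈ Submodule.span ℝ {u, w}) (hνw : 0 < ⟪ν, w⟫) :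
    ν = ‖w - ⟪u, w⟫ • u‖⁻¹ • (w - ⟪u, w⟫ • u) := by
  set v := w - ⟪u, w⟫ • u
  obtain ⟨a, b, rfl⟩ := Submodule.mem_span_pair.mp hspan
  have huu : ⟪u, u⟫ = 1 := by rw [real_inner_self_eq_norm_sq, hu, one_pow]
  have ha : a = -(b * ⟪u, w⟫) := by
    rw [inner_add_left, real_inner_smul_left, real_inner_smul_left, huu,
      real_inner_comm u w] at hνu
    linarith
  have hν_eq : a • u + b • w = b • v := by
    rw [ha]; module
  have hvw : ⟪v, w⟫ = ‖v‖ ^ 2 := by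
    rw [← real_inner_self_eq_norm_sq]
    simp only [v, inner_sub_left, inner_sub_right, real_inner_smul_left,
      real_inner_smul_right, huu, real_inner_comm u w]
    ring
  rw [hν_eq, real_inner_smul_left, hvw] at hνw
  have hb : 0 < b := pos_of_mul_pos_left hνw (sq_nonneg _)
  rw [hν_eq, norm_smul, Real.norm_of_nonneg hb.le] at hν
  rw [hν_eq, eq_inv_of_mul_eq_one_left hν]

theorem inner_eq_zero_of_norm_eq_const {u : ℝ → E} {u' : E} {t R : ℝ}
    (hu : HasDerivAt u u' t) (hR : ∀ s, ‖u s‖ = R) : ⟪u t, u'⟫ = 0 := by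
  have h := hu.norm_sq
  simp only [hR] at h
  have := h.unique (hasDerivAt_const t (R ^ 2))
  linarith

theorem HasDerivAt.norm {c : ℝ → E} {c' : E} {t : ℝ} (hc : HasDerivAt c c' t)
    (h0 : c t ≠ 0) : HasDerivAt (fun s => ‖c s‖) (⟪c t, c'⟫ / ‖c t‖) t := by
  have h := hc.norm_sq.sqrt (by positivity)
  simp only [Real.sqrt_sq (norm_nonneg _)] at h
  convert h using 1
  field_simp

theorem HasDerivAt.inv_norm_smul {c : ℝ → E} {c' : E} {t : ℝ} (hc : HasDerivAt c c' t)
    (h0 : c t ≠ 0) :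
    HasDerivAt (fun s => ‖c s‖⁻¹ • c s) (‖c t‖⁻¹ • c' - (⟪c t, c'⟫ / ‖c t‖ ^ 3) • c t) t := by
  refine (((hc.norm h0).inv (norm_ne_zero_iff.2 h0)).smul hc).congr_deriv ?_
  rw [sub_eq_add_neg, ← neg_smul]
  congr 2
  field_simp

theorem norm_inv_norm_smul_sub {x u : E} (hx : x ≠ 0) (hu : ‖u‖ = 1) :
    ‖‖x‖⁻¹ • u - (⟪x, u⟫ / ‖x‖ ^ 3) • x‖ = ‖x - ⟪u, x⟫ • u‖ / ‖x‖ ^ 2 := by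
  have hx' : ‖x‖ ≠ 0 := norm_ne_zero_iff.2 hx
  rw [← sq_eq_sq₀ (norm_nonneg _) (by positivity), div_pow, norm_sub_inner_smul_sq hu,
    @norm_sub_sq_real, norm_smul, norm_smul, real_inner_smul_left, real_inner_smul_right,
    hu, real_inner_comm x u, Real.norm_eq_abs, Real.norm_eq_abs, mul_pow, mul_pow, sq_abs,
    sq_abs]
  field_simp
  ring

theorem hasDerivAt_arcsin_inner_div_norm {x u : ℝ → E} {u' : E} {t : ℝ}
    (hx : HasDerivAt x (u t) t) (hu : HasDerivAt u u' t) (hu1 : ‖u t‖ = 1)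
    (hv : x t - ⟪u t, x t⟫ • u t ≠ 0) :
    HasDerivAt (fun s => arcsin (⟪u s, x s⟫ / ‖x s‖))
      (‖x t - ⟪u t, x t⟫ • u t‖ / ‖x t‖ ^ 2 + ⟪u', x t⟫ / ‖x t - ⟪u t, x t⟫ • u t‖) t := by
  set v := x t - ⟪u t, x t⟫ • u t
  have hx0 : x t ≠ 0 := fun h => hv (by simp [v, h])
  have hr : 0 < ‖x t‖ := norm_pos_iff.2 hx0
  have hvpos : 0 < ‖v‖ := norm_pos_iff.2 hv
  have hv2 : ‖v‖ ^ 2 = ‖x t‖ ^ 2 - ⟪u t, x t⟫ ^ 2 := norm_sub_inner_smul_sq hu1 _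
  have hf : HasDerivAt (fun s => ⟪u s, x s⟫) (⟪u', x t⟫ + 1) t := by
    simpa [hu1, add_comm] using hu.inner ℝ hx
  have hq := hf.div (hx.norm hx0) hr.ne'
  have hsqrt : √(1 - (⟪u t, x t⟫ / ‖x t‖) ^ 2) = ‖v‖ / ‖x t‖ := by
    have h : 1 - (⟪u t, x t⟫ / ‖x t‖) ^ 2 = (‖v‖ / ‖x t‖) ^ 2 := by
      rw [div_pow, div_pow, hv2]
      field_simp
    rw [h, Real.sqrt_sq (by positivity)]
  have hlt : (⟪u t, x t⟫ / ‖x t‖) ^ 2 < 1 := by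
    rw [div_pow, div_lt_one (by positivity)]
    nlinarith
  have h₁ : ⟪u t, x t⟫ / ‖x t‖ ≠ -1 := fun h => by norm_num [h] at hlt
  have h₂ : ⟪u t, x t⟫ / ‖x t‖ ≠ 1 := fun h => by norm_num [h] at hlt
  refine ((hasDerivAt_arcsin h₁ h₂).comp t hq).congr_deriv ?_
  rw [hsqrt, real_inner_comm (u t) (x t)]
  field_simp
  linear_combination -hv2

theorem Function.Periodic.periodic_of_hasDerivAt {F : Type*} [NormedAddCommGroup F]
    [NormedSpace ℝ F] {f f' : ℝ → F} {L : ℝ} (hf : Function.Periodic f L)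
    (hd : ∀ t, HasDerivAt f (f' t) t) : Function.Periodic f' L := fun t => by
  have h := (hd (t + L)).comp_add_const t L
  rw [show (fun s => f (s + L)) = f from funext hf] at h
  exact h.unique (hd t)

theorem integral_eq_neg_integral_of_hasDerivAt_add {φ f g : ℝ → ℝ} {a b : ℝ}
    (hφ : ∀ t, HasDerivAt φ (f t + g t) t) (hf : Continuous f) (hg : Continuous g)
    (hφab : φ b = φ a) : ∫ t in a..b, f t = -∫ t in a..b, g t := by
  have h := integral_eq_sub_of_hasDerivAt (fun t _ => hφ t) ((hf.add hg).intervalIntegrable a b)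
  rw [integral_add (hf.intervalIntegrable a b) (hg.intervalIntegrable a b), hφab, sub_self] at h
  linarith

theorem length_of_projection_eq_neg_integral_curvature_general (n : ℕ) (L : ℝ)
    (p : EuclideanSpace ℝ (Fin n)) (γ γ' γ'' : ℝ → EuclideanSpace ℝ (Fin n))
    (hderiv : ∀ t : ℝ, HasDerivAt γ (γ' t) t)
    (hderiv' : ∀ t : ℝ, HasDerivAt γ' (γ'' t) t)
    (hC2 : Continuous γ'')
    (hspeed : ∀ t : ℝ, ‖γ' t‖ = 1)
    (hclosed : ∀ t : ℝ, γ (t + L) = γ t)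
    (ν : ℝ → EuclideanSpace ℝ (Fin n))
    (hν₁ : ∀ t, ‖ν t‖ = 1)
    (hν₂ : ∀ t, ⟪ν t, γ' t⟫ = 0)
    (hν₃ : ∀ t, ν t ∈ Submodule.span ℝ ({γ' t, γ t - p} :
      Set (EuclideanSpace ℝ (Fin n))))
    (hν₄ : ∀ t, 0 < ⟪ν t, γ t - p⟫) :
    (∫ t in (0 : ℝ)..L,
        ‖deriv (fun s => p + ‖γ s - p‖⁻¹ • (γ s - p)) t‖) =
      -∫ t in (0 : ℝ)..L, ⟪γ'' t, ν t⟫ := by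
  set c := fun t => γ t - p
  set v := fun t => c t - ⟪γ' t, c t⟫ • γ' t
  have hc : ∀ t, HasDerivAt c (γ' t) t := fun t => (hderiv t).sub_const p
  have hν : ∀ t, ν t = ‖v t‖⁻¹ • v t := fun t =>
    eq_inv_norm_smul_of_mem_span_pair (hspeed t) (hν₁ t) (hν₂ t) (hν₃ t) (hν₄ t)
  have hv0 : ∀ t, v t ≠ 0 := fun t h => by simpa [hν t, h] using hν₁ t
  have hc0 : ∀ t, c t ≠ 0 := fun t h => hv0 t (by simp [v, h])
  have hproj : ∀ t, ‖deriv (fun s => p + ‖γ s - p‖⁻¹ • (γ s - p)) t‖ = ‖v t‖ / ‖c t‖ ^ 2 :=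
      fun t => by
    have h : HasDerivAt (fun s => p + ‖γ s - p‖⁻¹ • (γ s - p)) _ t :=
      ((hc t).inv_norm_smul (hc0 t)).const_add p
    rw [h.deriv]
    exact norm_inv_norm_smul_sub (hc0 t) (hspeed t)
  have hcurv : ∀ t, ⟪γ'' t, ν t⟫ = ⟪γ'' t, c t⟫ / ‖v t‖ := fun t => by
    rw [hν, real_inner_smul_right, inner_sub_right, real_inner_smul_right,
      real_inner_comm (γ' t) (γ'' t), inner_eq_zero_of_norm_eq_const (hderiv' t) hspeed]
    ring
  simp only [hproj, hcurv]
  have hγ' : Continuous γ' := continuous_iff_continuousAt.2 fun t => (hderiv' t).continuousAt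
  have hcc : Continuous c := continuous_iff_continuousAt.2 fun t => (hc t).continuousAt
  have hvc : Continuous v := by fun_prop
  refine integral_eq_neg_integral_of_hasDerivAt_add
    (fun t => hasDerivAt_arcsin_inner_div_norm (hc t) (hderiv' t) (hspeed t) (hv0 t))
    (hvc.norm.div (hcc.norm.pow 2) fun t => by simpa using hc0 t)
    ((hC2.inner hcc).div hvc.norm fun t => by simpa using hv0 t) ?_
  have hγ_per : Function.Periodic γ L := hclosed
  simp only [c, hγ_per.eq, (hγ_per.periodic_of_hasDerivAt hderiv).eq]

/-- **Gauss–Bonnet for a cone over a smooth closed curve.**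
Let `Γ₀` be a `C²` closed (period `L`) unit-speed curve `γ` in `ℝⁿ` lying
outside the closed unit ball centered at `p`, and let
`Π_p(x) = p + (x−p)/‖x−p‖` be the radial projection to the unit sphere around
`p`.  Let `ν t` be the unit vector normal to the curve at `γ t`, lying in the
plane spanned by the tangent `γ' t` and `γ t − p`, and pointing away from `p`
(the outward conormal of the cone `C_p(Γ₀)`).  Then the length of `Π_p(Γ₀)`
equals `−∫_{Γ₀} ⟨k⃗, ν⟩ ds`, where `k⃗ = γ''` is the curvature vector. -/
theorem length_of_projection_eq_neg_integral_curvature (n : ℕ) (L : ℝ) (hL : 0 < L)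
    (p : EuclideanSpace ℝ (Fin n)) (γ γ' γ'' : ℝ → EuclideanSpace ℝ (Fin n))
    (hderiv : ∀ t : ℝ, HasDerivAt γ (γ' t) t)
    (hderiv' : ∀ t : ℝ, HasDerivAt γ' (γ'' t) t)
    (hC2 : Continuous γ'')
    (hspeed : ∀ t : ℝ, ‖γ' t‖ = 1)
    (hclosed : ∀ t : ℝ, γ (t + L) = γ t)
    (hout : ∀ t : ℝ, 1 ≤ ‖γ t - p‖)
    (ν : ℝ → EuclideanSpace ℝ (Fin n))
    (hν₁ : ∀ t, ‖ν t‖ = 1)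
    (hν₂ : ∀ t, ⟪ν t, γ' t⟫ = 0)
    (hν₃ : ∀ t, ν t ∈ Submodule.span ℝ ({γ' t, γ t - p} :
      Set (EuclideanSpace ℝ (Fin n))))
    (hν₄ : ∀ t, 0 < ⟪ν t, γ t - p⟫) :
    (∫ t in (0 : ℝ)..L,
        ‖deriv (fun s => p + ‖γ s - p‖⁻¹ • (γ s - p)) t‖) =
      -∫ t in (0 : ℝ)..L, ⟪γ'' t, ν t⟫ :=
  length_of_projection_eq_neg_integral_curvature_general n L p γ γ' γ'' hderiv hderiv' hC2 hspeed
    hclosed ν hν₁ hν₂ hν₃ hν₄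
end
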